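/- arXiv:2105.06570 — 3 statements merged into one kernel-verified Lean document; each statement's English description precedes it below -/
import Mathlib

section
/- For any possibility distribution π : W → [0,1] and any f : W → [0,1]: (Π(const 1) ⇒_G Π(f)) = N(const Π(f)), i.e. the scheme Sk_◇ ((◇⊤ → ◇φ) ↔ □◇φ) is valid in possibilistic Gödel models: (sup_w π(w)) ⇒_G Π(f) equals inf_w (π(w) ⇒_G Π(f)). -/
open scoped Classical

instance : Fact ((0:ℝ) ≤ 1) := ⟨zero_le_one⟩

/-- Gödel implication on the unit interval. -/
noncomputable def gimp (x y : unitInterval) : unitInterval := if x ≤ y then 1 else y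

/-- Necessity measure induced by a possibility distribution `π`. -/
noncomputable def Nec {W : Type*} (π f : W → unitInterval) : unitInterval :=
  ⨅ w, gimp (π w) (f w)

/-- Possibility measure induced by a possibility distribution `π`. -/
noncomputable def Pos {W : Type*} (π f : W → unitInterval) : unitInterval :=
  ⨆ w, min (π w) (f w)

/-! Gödel implication into a fixed `y` sends suprema to infima: if `⨆ i, x i ≤ y` both sides
are `1`, and otherwise some `x i` already exceeds `y`, so both sides are `y`. Since
`Pos π (fun _ => 1) = ⨆ w, π w`, the theorem is this identity with `y = Pos π f`. -/

lemma gimp_eq_one_of_le {x y : unitInterval} (h : x ≤ y) : gimp x y = 1 := if_pos h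

lemma gimp_eq_of_lt {x y : unitInterval} (h : y < x) : gimp x y = y := if_neg h.not_ge

lemma le_gimp (x y : unitInterval) : y ≤ gimp x y := by
  unfold gimp
  split_ifs
  · exact unitInterval.le_one'
  · exact le_rfl

lemma gimp_iSup_left {ι : Sort*} (x : ι → unitInterval) (y : unitInterval) :
    gimp (⨆ i, x i) y = ⨅ i, gimp (x i) y := by
  by_cases h : ⨆ i, x i ≤ y
  · rw [gimp_eq_one_of_le h]
    exact (iInf_eq_top.2 fun i => gimp_eq_one_of_le ((le_iSup x i).trans h)).symm
  · obtain ⟨i, hi⟩ := lt_iSup_iff.1 (not_le.1 h)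
    rw [gimp_eq_of_lt (not_le.1 h)]
    exact le_antisymm (le_iInf fun j => le_gimp _ _) ((iInf_le _ i).trans (gimp_eq_of_lt hi).le)

lemma Pos_const_one {W : Type*} (π : W → unitInterval) : Pos π (fun _ => 1) = ⨆ w, π w := by
  simp only [Pos, min_eq_left unitInterval.le_one']

theorem stmt11_general {W : Type*} (π f : W → unitInterval) :
    gimp (Pos π (fun _ => 1)) (Pos π f) = Nec π (fun _ => Pos π f) := by
  rw [Pos_const_one, gimp_iSup_left]
  rfl

theorem stmt11 {W : Type*} [Nonempty W] (π f : W → unitInterval) :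
    gimp (Pos π (fun _ => 1)) (Pos π f) = Nec π (fun _ => Pos π f) :=
  stmt11_general π f
end

section
/- In any possibilistic Gödel model with finite set of worlds W, the formula □¬¬p → ¬¬□p is valid: if f : W → [0,1] and W is finite and nonempty, then N(λw. ¬¬f(w)) ≤ ¬¬N(f), where ¬x = x ⇒_G 0 and N(h) = min over w of (π(w) ⇒_G h(w)). -/
open scoped Classical

noncomputable def gneg (x : unitInterval) : unitInterval := gimp x 0

/-! If `N(f) ≠ 0` then `¬¬N(f) = 1` and there is nothing to prove. Otherwise, `W` being finite,
the minimum `N(f) = 0` is attained at a world `w` with `π(w) > 0` and `f(w) = 0`; there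
`¬¬f(w) = 0` as well, so `π(w) ⇒ ¬¬f(w) = 0` and the left-hand side vanishes. -/

lemma gimp_eq_zero_iff {x y : unitInterval} : gimp x y = 0 ↔ x ≠ 0 ∧ y = 0 := by
  unfold gimp
  split_ifs with hxy
  · simp only [one_ne_zero, false_iff, not_and]
    rintro hx rfl
    exact hx (le_antisymm hxy x.2.1)
  · constructor
    · rintro rfl
      exact ⟨fun hx => hxy (hx ▸ le_rfl), rfl⟩
    · exact And.right

@[simp]
lemma gneg_zero : gneg 0 = 1 := by simp [gneg, gimp]

lemma gneg_of_ne_zero {x : unitInterval} (hx : x ≠ 0) : gneg x = 0 :=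
  gimp_eq_zero_iff.mpr ⟨hx, rfl⟩

lemma gneg_gneg_zero : gneg (gneg 0) = 0 := by
  rw [gneg_zero, gneg_of_ne_zero one_ne_zero]

lemma gneg_gneg_of_ne_zero {x : unitInterval} (hx : x ≠ 0) : gneg (gneg x) = 1 := by
  rw [gneg_of_ne_zero hx, gneg_zero]

lemma exists_Nec_eq_gimp {W : Type*} [Finite W] [Nonempty W] (π f : W → unitInterval) :
    ∃ w, Nec π f = gimp (π w) (f w) :=
  exists_eq_ciInf_of_finite.imp fun _ hw => hw.symm

theorem stmt13 {W : Type*} [Fintype W] [Nonempty W] (π f : W → unitInterval) :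
    Nec π (fun w => gneg (gneg (f w))) ≤ gneg (gneg (Nec π f)) := by
  by_cases hN : Nec π f = 0
  · obtain ⟨w, hw⟩ := exists_Nec_eq_gimp π f
    obtain ⟨hπw, hfw⟩ := gimp_eq_zero_iff.mp (hw ▸ hN)
    calc Nec π (fun w => gneg (gneg (f w)))
        ≤ gimp (π w) (gneg (gneg (f w))) := iInf_le _ w
      _ = 0 := gimp_eq_zero_iff.mpr ⟨hπw, hfw ▸ gneg_gneg_zero⟩
      _ ≤ _ := unitInterval.nonneg _
  · rw [gneg_gneg_of_ne_zero hN]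
    exact unitInterval.le_one _
end

section
/- Prelinearity-dependent scheme T4 is valid in possibilistic Gödel models: for any π : W → [0,1] and f, g : W → [0,1], max( N(f) ⇒_G Π(g), N(λw. (f(w) ⇒_G g(w)) ⇒_G g(w)) ) = 1. -/
open scoped Classical

/-!
If `Π(g) < N(f)`, the second disjunct holds at every world `w`: the value of
`(f w ⇒ g w) ⇒ g w` is `1` when `g w < f w` and `g w` otherwise, and in the latter case
`g w < π w` would give `N(f) ≤ f w ≤ g w = min (π w) (g w) ≤ Π(g)`.
-/

section Godel

variable {x y : unitInterval}

theorem gimp_eq_one_iff : gimp x y = 1 ↔ x ≤ y := by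
  refine ⟨fun h => ?_, fun h => if_pos h⟩
  by_contra hxy
  rw [gimp, if_neg hxy] at h
  exact hxy (h ▸ unitInterval.le_one')

theorem gimp_of_lt (h : y < x) : gimp x y = y := if_neg h.not_ge

theorem gimp_gimp_self (x y : unitInterval) :
    gimp (gimp x y) y = if x ≤ y then y else 1 := by
  by_cases hxy : x ≤ y
  · rw [if_pos hxy, gimp_eq_one_iff.2 hxy, gimp]
    split_ifs with hy
    · exact le_antisymm hy unitInterval.le_one'
    · rfl
  · rw [gimp_of_lt (not_le.1 hxy), if_neg hxy, gimp, if_pos le_rfl]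

end Godel

section Possibilistic

variable {W : Type*} {π f g : W → unitInterval}

theorem Nec_eq_one_iff : Nec π f = 1 ↔ ∀ w, π w ≤ f w := by
  simp only [Nec, ← gimp_eq_one_iff]
  exact iInf_eq_top

theorem Nec_le_of_lt {w : W} (h : f w < π w) : Nec π f ≤ f w :=
  (iInf_le _ w).trans_eq (gimp_of_lt h)

theorem min_le_Pos (w : W) : min (π w) (g w) ≤ Pos π g :=
  le_iSup (fun w => min (π w) (g w)) w

theorem Nec_gimp_gimp_self_eq_one_of_Pos_lt (h : Pos π g < Nec π f) :
    Nec π (fun w => gimp (gimp (f w) (g w)) (g w)) = 1 := by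
  refine Nec_eq_one_iff.2 fun w => ?_
  rw [gimp_gimp_self]
  split_ifs with hfg
  · by_contra! hgπ
    have hNf : Nec π f ≤ f w := Nec_le_of_lt (hfg.trans_lt hgπ)
    have hgPos : g w ≤ Pos π g := (min_eq_right hgπ.le).symm.trans_le (min_le_Pos w)
    exact h.not_ge (hNf.trans (hfg.trans hgPos))
  · exact unitInterval.le_one'

end Possibilistic

theorem stmt16_general {W : Type*} (π f g : W → unitInterval) :
    max (gimp (Nec π f) (Pos π g))
      (Nec π (fun w => gimp (gimp (f w) (g w)) (g w))) = 1 := by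
  rcases le_or_gt (Nec π f) (Pos π g) with h | h
  · rw [gimp_eq_one_iff.2 h, max_eq_left unitInterval.le_one']
  · rw [Nec_gimp_gimp_self_eq_one_of_Pos_lt h, max_eq_right unitInterval.le_one']

theorem stmt16 {W : Type*} [Nonempty W] (π f g : W → unitInterval) :
    max (gimp (Nec π f) (Pos π g))
      (Nec π (fun w => gimp (gimp (f w) (g w)) (g w))) = 1 :=
  stmt16_general π f g
end
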